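/- arXiv:0802.0173 — 6 statements merged into one kernel-verified Lean document; each statement's English description precedes it below -/
import Mathlib

section
/- Let W be an irreducible module of level 1 over the Heisenberg Lie algebra H_I (with basis p_i, q_i (i ∈ I) and central element k, relations [p_i,q_j]=δ_{ij}k, all others zero; level 1 means k acts as identity). For i ∈ I, the operator p_i has an eigenvector in W if and only if p_i acts locally finitely on W. -/
/-- A level-one module for the Heisenberg Lie algebra `H_I` with basis
`{p_i, q_i, k | i ∈ I}`, relations `[p_i, q_j] = δ_{ij} k`, all other brackets zero,
where the central element `k` acts as the identity (level `1`). -/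
structure HeisenbergRep (I : Type) (W : Type) [AddCommGroup W] [Module ℂ W] where
  p : I → Module.End ℂ W
  q : I → Module.End ℂ W
  comm_pp : ∀ i j, Commute (p i) (p j)
  comm_qq : ∀ i j, Commute (q i) (q j)
  comm_pq_same : ∀ i, p i * q i - q i * p i = 1
  comm_pq_ne : ∀ i j, i ≠ j → Commute (p i) (q j)

namespace HeisenbergRep

variable {I : Type} {W : Type} [AddCommGroup W] [Module ℂ W]

/-- A submodule stable under all the Heisenberg operators. -/
def Stable (ρ : HeisenbergRep I W) (S : Submodule ℂ W) : Prop :=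
  (∀ i, ∀ w ∈ S, ρ.p i w ∈ S) ∧ (∀ i, ∀ w ∈ S, ρ.q i w ∈ S)

/-- `S` is a nonzero stable submodule with no proper nonzero stable submodule. -/
def IsSimpleSub (ρ : HeisenbergRep I W) (S : Submodule ℂ W) : Prop :=
  ρ.Stable S ∧ S ≠ ⊥ ∧ ∀ T : Submodule ℂ W, ρ.Stable T → T ≤ S → T = ⊥ ∨ T = S

/-- Irreducibility of the representation. -/
def IsIrreducible (ρ : HeisenbergRep I W) : Prop := ρ.IsSimpleSub ⊤

end HeisenbergRep

/-- An endomorphism is locally finite if every vector lies in a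
finitely generated (equivalently, finite-dimensional) stable subspace. -/
def Module.End.LocallyFinite {W : Type} [AddCommGroup W] [Module ℂ W]
    (T : Module.End ℂ W) : Prop :=
  ∀ w : W, ∃ S : Submodule ℂ W, w ∈ S ∧ S.FG ∧ ∀ v ∈ S, T v ∈ S

/-- An endomorphism is locally nilpotent if every vector is killed by some power of it. -/
def Module.End.LocallyNilpotent {W : Type} [AddCommGroup W] [Module ℂ W]
    (T : Module.End ℂ W) : Prop :=
  ∀ w : W, ∃ n : ℕ, (T ^ n) w = 0

private lemma pow_comm_aux {W : Type} [AddCommGroup W] [Module ℂ W]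
    (A B : Module.End ℂ W) (h : A * B - B * A = 1) :
    ∀ n : ℕ, A ^ (n + 1) * B = B * A ^ (n + 1) + (n + 1) • A ^ n := by
  have hAB : A * B = B * A + 1 := by
    rw [sub_eq_iff_eq_add] at h; rw [h]; abel
  intro n
  induction n with
  | zero => simpa [pow_succ] using hAB
  | succ n ih =>
    calc A ^ (n + 2) * B = A * (A ^ (n + 1) * B) := by rw [pow_succ', mul_assoc]
      _ = A * (B * A ^ (n + 1) + (n + 1) • A ^ n) := by rw [ih]
      _ = (A * B) * A ^ (n + 1) + (n + 1) • A ^ (n + 1) := by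
            rw [mul_add, mul_smul_comm, ← mul_assoc, ← pow_succ']
      _ = B * A ^ (n + 2) + (n + 2) • A ^ (n + 1) := by
            rw [hAB, add_mul, one_mul, succ_nsmul (A ^ (n+1)) (n+1), mul_assoc, ← pow_succ']
            abel

/-- For an irreducible level-one module `W` over the Heisenberg Lie algebra `H_I`,
the operator `p_i` has an eigenvector in `W` iff `p_i` acts locally finitely on `W`. -/
theorem heisenberg_eigenvector_iff_locallyFinite
    {I W : Type} [AddCommGroup W] [Module ℂ W]
    (ρ : HeisenbergRep I W) (hirr : ρ.IsIrreducible) (i : I) :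
    (∃ w : W, w ≠ 0 ∧ ∃ c : ℂ, ρ.p i w = c • w) ↔ (ρ.p i).LocallyFinite := by
  constructor
  · rintro ⟨w, hw0, c, hwc⟩
    set D : Module.End ℂ W := ρ.p i - c • 1 with hDdef
    have hpD : ∀ x : W, ρ.p i x = D x + c • x := by
      intro x; simp [hDdef]
    have hDq : D * ρ.q i - ρ.q i * D = 1 := by
      have := ρ.comm_pq_same i
      rw [hDdef]
      rw [sub_mul, mul_sub, smul_mul_assoc, mul_smul_comm, one_mul, mul_one]
      rw [sub_sub_sub_comm] at *
      simpa using this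
    -- the generalized eigenspace as a submodule
    let S : Submodule ℂ W :=
      { carrier := {x | ∃ n, (D ^ n) x = 0}
        zero_mem' := ⟨0, map_zero _⟩
        add_mem' := by
          rintro a b ⟨m, hm⟩ ⟨n, hn⟩
          refine ⟨n + m, ?_⟩
          rw [map_add]
          have ha : (D ^ (n + m)) a = 0 := by
            rw [pow_add, Module.End.mul_apply, hm, map_zero]
          have hb : (D ^ (n + m)) b = 0 := by
            rw [add_comm, pow_add, Module.End.mul_apply, hn, map_zero]
          rw [ha, hb, add_zero]
        smul_mem' := by
          rintro r a ⟨m, hm⟩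
          exact ⟨m, by rw [map_smul, hm, smul_zero]⟩ }
    have hmemS : ∀ x : W, x ∈ S ↔ ∃ n, (D ^ n) x = 0 := fun x => Iff.rfl
    -- S is stable
    have hstab : ρ.Stable S := by
      constructor
      · rintro j x ⟨n, hn⟩
        have hc : Commute (ρ.p j) D :=
          (ρ.comm_pp j i).sub_right ((Commute.one_right (ρ.p j)).smul_right c)
        refine ⟨n, ?_⟩
        rw [← Module.End.mul_apply, ← (hc.pow_right n).eq, Module.End.mul_apply, hn,
          map_zero]
      · rintro j x ⟨n, hn⟩
        by_cases hj : j = i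
        · subst hj
          refine ⟨n + 1, ?_⟩
          have := pow_comm_aux D (ρ.q j) hDq n
          have happ : (D ^ (n + 1)) (ρ.q j x) =
              (ρ.q j) ((D ^ (n + 1)) x) + (n + 1) • (D ^ n) x := by
            conv_lhs => rw [← Module.End.mul_apply, this]
            simp [Module.End.mul_apply, succ_nsmul]
          rw [happ, hn, smul_zero, add_zero]
          have : (D ^ (n + 1)) x = 0 := by
            rw [pow_succ', Module.End.mul_apply, hn, map_zero]
          rw [this, map_zero]
        · have hc : Commute (ρ.q j) D :=
            ((ρ.comm_pq_ne i j (fun h => hj h.symm)).symm).sub_right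
              ((Commute.one_right (ρ.q j)).smul_right c)
          refine ⟨n, ?_⟩
          rw [← Module.End.mul_apply, ← (hc.pow_right n).eq, Module.End.mul_apply, hn,
            map_zero]
    -- S is nonzero
    have hwS : w ∈ S := ⟨1, by rw [pow_one]; simp [hDdef, hwc]⟩
    have hSne : S ≠ ⊥ := fun h => hw0 (by simpa [h] using hwS)
    -- irreducibility forces S = ⊤
    have hStop : S = ⊤ := by
      rcases hirr.2.2 S hstab le_top with h | h
      · exact absurd h hSne
      · exact h
    -- local nilpotency of D gives local finiteness of p i
    intro v
    obtain ⟨n, hn⟩ : ∃ n, (D ^ n) v = 0 := by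
      have : v ∈ S := hStop ▸ Submodule.mem_top
      exact this
    set S' : Submodule ℂ W :=
      Submodule.span ℂ (Set.range fun k : Fin (n + 1) => (D ^ (k : ℕ)) v) with hS'
    have hDk : ∀ k : ℕ, (D ^ k) v ∈ S' := by
      intro k
      by_cases hk : k ≤ n
      · exact Submodule.subset_span ⟨⟨k, Nat.lt_succ_of_le hk⟩, rfl⟩
      · have hz : (D ^ k) v = 0 := by
          have : k = (k - n) + n := (Nat.sub_add_cancel (le_of_not_ge hk)).symm
          rw [this, pow_add, Module.End.mul_apply, hn, map_zero]
        rw [hz]; exact S'.zero_mem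
    refine ⟨S', ?_, ?_, ?_⟩
    · simpa using hDk 0

    · exact Submodule.fg_span (Set.finite_range _)
    · intro x hx
      rw [hS'] at hx
      induction hx using Submodule.span_induction with
      | mem y hy =>
        obtain ⟨k, rfl⟩ := hy
        rw [hpD]
        refine S'.add_mem ?_ (S'.smul_mem c (hDk k))
        have : D ((D ^ (k : ℕ)) v) = (D ^ ((k : ℕ) + 1)) v := by
          rw [pow_succ', Module.End.mul_apply]
        rw [this]
        exact hDk _
      | zero => simpa using S'.zero_mem
      | add y z _ _ hy hz => rw [map_add]; exact S'.add_mem hy hz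
      | smul a y _ hy => rw [map_smul]; exact S'.smul_mem a hy
  · intro hlf
    have hW : ∃ w : W, w ≠ 0 := by
      by_contra h
      push_neg at h
      exact hirr.2.1 (by ext x; simp [h x])
    obtain ⟨w, hw0⟩ := hW
    obtain ⟨S, hwS, hfg, hstab⟩ := hlf w
    haveI : Module.Finite ℂ S := (Module.Finite.iff_fg).mpr hfg
    haveI : FiniteDimensional ℂ S := inferInstance
    haveI : Nontrivial S := ⟨⟨⟨w, hwS⟩, 0, by simp [Subtype.ext_iff, hw0]⟩⟩
    let f : Module.End ℂ S := (ρ.p i).restrict hstab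
    obtain ⟨c, hc⟩ := Module.End.exists_eigenvalue f
    obtain ⟨v, hv⟩ := hc.exists_hasEigenvector
    refine ⟨(v : W), fun h => hv.2 (Subtype.ext (by rw [h, ZeroMemClass.coe_zero])), c, ?_⟩
    have h1 : f v = c • v := by
      have := hv.1
      rwa [Module.End.mem_eigenspace_iff] at this
    have h2 := congrArg Subtype.val h1
    rw [LinearMap.restrict_coe_apply] at h2
    simpa using h2
end

section
/- Let W be an irreducible module of level 1 over the Heisenberg Lie algebra H_I. For i ∈ I, there exists a nonzero w ∈ W with p_i w = 0 if and only if p_i acts locally nilpotently on W. -/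
private lemma heis_pq_pow {I W : Type} [AddCommGroup W] [Module ℂ W]
    (ρ : HeisenbergRep I W) (i : I) :
    ∀ n : ℕ, ρ.p i ^ (n + 1) * ρ.q i = ρ.q i * ρ.p i ^ (n + 1) + (n + 1 : ℕ) • ρ.p i ^ n := by
  intro n
  induction n with
  | zero =>
    simp only [zero_add, pow_one, pow_zero, one_smul]
    have := sub_eq_iff_eq_add.mp (ρ.comm_pq_same i)
    rw [this, add_comm]
  | succ n ih =>
    have hpq : ρ.p i * ρ.q i = ρ.q i * ρ.p i + 1 := by
      rw [sub_eq_iff_eq_add.mp (ρ.comm_pq_same i), add_comm]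
    calc ρ.p i ^ (n + 2) * ρ.q i = ρ.p i * (ρ.p i ^ (n + 1) * ρ.q i) := by
          rw [← mul_assoc, ← pow_succ']
      _ = ρ.p i * (ρ.q i * ρ.p i ^ (n + 1) + (n + 1 : ℕ) • ρ.p i ^ n) := by rw [ih]
      _ = (ρ.p i * ρ.q i) * ρ.p i ^ (n + 1) + (n + 1 : ℕ) • ρ.p i ^ (n + 1) := by
          rw [mul_add, mul_smul_comm, ← mul_assoc, ← pow_succ']
      _ = ρ.q i * ρ.p i ^ (n + 2) + ((n + 1 : ℕ) • ρ.p i ^ (n + 1) + ρ.p i ^ (n + 1)) := by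
          rw [hpq, add_mul, one_mul, mul_assoc, ← pow_succ']; abel
      _ = ρ.q i * ρ.p i ^ (n + 2) + (n + 1 + 1 : ℕ) • ρ.p i ^ (n + 1) := by
          rw [succ_nsmul (ρ.p i ^ (n + 1)) (n + 1)]

/-- For an irreducible level-one module `W` over the Heisenberg Lie algebra `H_I`,
there is a nonzero `w` with `p_i w = 0` iff `p_i` acts locally nilpotently on `W`. -/
theorem heisenberg_kernel_iff_locallyNilpotent
    {I W : Type} [AddCommGroup W] [Module ℂ W]
    (ρ : HeisenbergRep I W) (hirr : ρ.IsIrreducible) (i : I) :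
    (∃ w : W, w ≠ 0 ∧ ρ.p i w = 0) ↔ (ρ.p i).LocallyNilpotent := by
  constructor
  · rintro ⟨w, hw, hpw⟩
    -- the locally nilpotent vectors form a stable submodule
    have hmono : ∀ (v : W) (n m : ℕ), n ≤ m → (ρ.p i ^ n) v = 0 → (ρ.p i ^ m) v = 0 := by
      intro v n m hnm h
      obtain ⟨k, rfl⟩ := Nat.exists_eq_add_of_le hnm
      rw [add_comm, pow_add, Module.End.mul_apply, h, map_zero]
    set S : Submodule ℂ W :=
      { carrier := {v | ∃ n, (ρ.p i ^ n) v = 0}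
        add_mem' := by
          rintro a b ⟨n, hn⟩ ⟨m, hm⟩
          exact ⟨max n m, by
            rw [map_add, hmono a n _ (le_max_left n m) hn,
              hmono b m _ (le_max_right n m) hm, add_zero]⟩
        zero_mem' := ⟨0, map_zero _⟩
        smul_mem' := by rintro c a ⟨n, hn⟩; exact ⟨n, by rw [map_smul, hn, smul_zero]⟩ }
      with hS
    have hstab : ρ.Stable S := by
      constructor
      · intro j v hv
        obtain ⟨n, hn⟩ := hv
        refine ⟨n, ?_⟩
        have : ρ.p i ^ n * ρ.p j = ρ.p j * ρ.p i ^ n := ((ρ.comm_pp i j).pow_left n).eq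
        have := congrArg (fun E : Module.End ℂ W => E v) this
        simp only [Module.End.mul_apply] at this
        rw [this, hn, map_zero]
      · intro j v hv
        obtain ⟨n, hn⟩ := hv
        by_cases hij : i = j
        · subst hij
          refine ⟨n + 1, ?_⟩
          have := congrArg (fun E : Module.End ℂ W => E v) (heis_pq_pow ρ i n)
          simp only [Module.End.mul_apply, LinearMap.add_apply, LinearMap.smul_apply] at this
          rw [this, hmono v n (n+1) (Nat.le_succ n) hn, hn, map_zero, smul_zero, add_zero]
        · refine ⟨n, ?_⟩
          have : ρ.p i ^ n * ρ.q j = ρ.q j * ρ.p i ^ n := ((ρ.comm_pq_ne i j hij).pow_left n).eq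
          have := congrArg (fun E : Module.End ℂ W => E v) this
          simp only [Module.End.mul_apply] at this
          rw [this, hn, map_zero]
    have hSne : S ≠ ⊥ := by
      intro h
      apply hw
      have hwS : w ∈ S := ⟨1, by rwa [pow_one]⟩
      rw [h] at hwS
      simpa using hwS
    rcases hirr.2.2 S hstab le_top with h | h
    · exact absurd h hSne
    · intro v
      have : v ∈ S := h ▸ Submodule.mem_top
      exact this
  · intro hln
    obtain ⟨v, -, hv⟩ := Submodule.ne_bot_iff _ |>.mp hirr.2.1
    obtain ⟨n, hn⟩ := hln v
    have hex : ∃ n, (ρ.p i ^ n) v = 0 := ⟨n, hn⟩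
    classical
    set m := Nat.find hex with hm
    have hm0 : m ≠ 0 := by
      intro h
      have := Nat.find_spec hex
      rw [← hm, h, pow_zero] at this
      exact hv (by simpa using this)
    obtain ⟨k, hk⟩ := Nat.exists_eq_succ_of_ne_zero hm0
    refine ⟨(ρ.p i ^ k) v, ?_, ?_⟩
    · intro h
      exact Nat.find_min hex (hm ▸ hk ▸ Nat.lt_succ_self k) h
    · have := Nat.find_spec hex
      rw [← hm, hk, pow_succ'] at this
      simpa [Module.End.mul_apply] using this
end

section
/- Let W be an irreducible module of level 1 over the Heisenberg Lie algebra H_I and let i ∈ I. If p_i acts locally finitely on W, then every nonzero subspace of W stable under q_i is infinite-dimensional; in particular q_i does not act locally finitely on W. -/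
lemma no_fd_commutator {V : Type*} [AddCommGroup V] [Module ℂ V] [FiniteDimensional ℂ V]
    [Nontrivial V] (P Q : Module.End ℂ V) (h : P * Q - Q * P = 1) : False := by
  have h1 : LinearMap.trace ℂ V (P * Q - Q * P) = 0 := by
    rw [map_sub, LinearMap.trace_mul_comm, sub_self]
  rw [h, LinearMap.trace_one] at h1
  have h2 : Module.finrank ℂ V = 0 := by exact_mod_cast h1
  exact (Module.finrank_pos (R := ℂ) (M := V)).ne' h2

lemma qstable_not_fg {I W : Type} [AddCommGroup W] [Module ℂ W]
    (ρ : HeisenbergRep I W) (i : I) (hp : (ρ.p i).LocallyFinite)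
    (S : Submodule ℂ W) (hSne : S ≠ ⊥) (hSq : ∀ w ∈ S, ρ.q i w ∈ S) : ¬ S.FG := by
  intro hFG
  haveI : FiniteDimensional ℂ S := Module.Finite.iff_fg.mpr hFG
  haveI : Nontrivial S := Submodule.nontrivial_iff_ne_bot.mpr hSne
  set QS : Module.End ℂ S := (ρ.q i).restrict (fun x hx => hSq x hx) with hQS
  obtain ⟨μ, hμ⟩ := Module.End.exists_eigenvalue QS
  obtain ⟨v, hv⟩ := hμ.exists_hasEigenvector
  set w : W := (v : W) with hwdef
  have hw0 : w ≠ 0 := fun h => hv.2 (Subtype.ext h)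
  have hqw : ρ.q i w = μ • w := by
    have := hv.apply_eq_smul
    have := congrArg (Subtype.val) this
    simpa [hQS, LinearMap.restrict_apply] using this
  obtain ⟨U, hwU, hUfg, hUp⟩ := hp w
  haveI : FiniteDimensional ℂ U := Module.Finite.iff_fg.mpr hUfg
  set u : ℕ → W := fun n => (ρ.p i ^ n) w with hu
  have hustep : ∀ n, u (n + 1) = ρ.p i (u n) := by
    intro n
    simp [hu, pow_succ', Module.End.mul_apply]
  have huU : ∀ n, u n ∈ U := by
    intro n
    induction n with
    | zero => simpa [hu] using hwU
    | succ n ih => rw [hustep]; exact hUp _ ih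
  set V : Submodule ℂ W := Submodule.span ℂ (Set.range u) with hV
  have hVU : V ≤ U := Submodule.span_le.mpr (by rintro _ ⟨n, rfl⟩; exact huU n)
  haveI : FiniteDimensional ℂ V := Submodule.finiteDimensional_of_le hVU
  have hwV : w ∈ V := by
    apply Submodule.subset_span
    exact ⟨0, by simp [hu]⟩
  haveI : Nontrivial V := ⟨⟨w, hwV⟩, 0, by simp [hw0]⟩
  have hVp : ∀ x ∈ V, ρ.p i x ∈ V := by
    intro x hx
    induction hx using Submodule.span_induction with
    | mem x hx =>
        obtain ⟨n, rfl⟩ := hx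
        rw [← hustep]
        exact Submodule.subset_span ⟨n + 1, rfl⟩
    | zero => simp
    | add a b _ _ ha hb => rw [map_add]; exact V.add_mem ha hb
    | smul c a _ ha => rw [map_smul]; exact V.smul_mem c ha
  have key : ∀ x : W, ρ.q i (ρ.p i x) = ρ.p i (ρ.q i x) - x := by
    intro x
    have := congrArg (fun f : Module.End ℂ W => f x) (ρ.comm_pq_same i)
    simp only [LinearMap.sub_apply, Module.End.mul_apply, Module.End.one_apply] at this
    rw [sub_eq_iff_eq_add.mp this]
    abel
  have hqu : ∀ n, ρ.q i (u n) ∈ V := by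
    intro n
    induction n with
    | zero =>
        have : u 0 = w := by simp [hu]
        rw [this, hqw]
        exact V.smul_mem μ hwV
    | succ n ih =>
        rw [hustep, key]
        exact V.sub_mem (hVp _ ih) (Submodule.subset_span ⟨n, rfl⟩)
  have hVq : ∀ x ∈ V, ρ.q i x ∈ V := by
    intro x hx
    induction hx using Submodule.span_induction with
    | mem x hx => obtain ⟨n, rfl⟩ := hx; exact hqu n
    | zero => simp
    | add a b _ _ ha hb => rw [map_add]; exact V.add_mem ha hb
    | smul c a _ ha => rw [map_smul]; exact V.smul_mem c ha
  set P : Module.End ℂ V := (ρ.p i).restrict (fun x hx => hVp x hx) with hP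
  set Q : Module.End ℂ V := (ρ.q i).restrict (fun x hx => hVq x hx) with hQ
  have hcomm : P * Q - Q * P = 1 := by
    apply LinearMap.ext
    intro x
    apply Subtype.ext
    have hg := congrArg (fun f : Module.End ℂ W => f (x : W)) (ρ.comm_pq_same i)
    simp only [LinearMap.sub_apply, Module.End.mul_apply, Module.End.one_apply] at hg
    simpa [hP, hQ, Module.End.mul_apply, LinearMap.restrict_apply] using hg
  exact no_fd_commutator P Q hcomm

/-- For an irreducible level-one module `W` over the Heisenberg Lie algebra `H_I`:
if `p_i` acts locally finitely, then every nonzero `q_i`-stable subspace of `W` is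
infinite-dimensional; in particular `q_i` does not act locally finitely. -/
theorem heisenberg_qStable_infiniteDimensional
    {I W : Type} [AddCommGroup W] [Module ℂ W]
    (ρ : HeisenbergRep I W) (hirr : ρ.IsIrreducible) (i : I)
    (hp : (ρ.p i).LocallyFinite) :
    (∀ S : Submodule ℂ W, S ≠ ⊥ → (∀ w ∈ S, ρ.q i w ∈ S) → ¬ S.FG) ∧
      ¬ (ρ.q i).LocallyFinite := by
  constructor
  · exact fun S hne hq => qstable_not_fg ρ i hp S hne hq
  · intro hq
    obtain ⟨w, -, hw0⟩ := Submodule.exists_mem_ne_zero_of_ne_bot hirr.2.1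
    obtain ⟨S, hwS, hFG, hSq⟩ := hq w
    have hSne : S ≠ ⊥ := fun h => hw0 (by simpa [h] using hwS)
    exact qstable_not_fg ρ i hp S hSne hSq hFG
end

section
/- Let I be a nonempty set and let λ : I → ℂ be a function with finite support. On the space M(1,λ) = e^{λx} ℂ[x_i | i ∈ I] of functions (where λx = Σ λ_i x_i), define an action of the Heisenberg algebra H_I by letting p_i act as ∂/∂x_i, q_i act as multiplication by x_i, and k act as the identity. Then M(1,λ) is an irreducible H_I-module. -/
namespace HeisenbergRep

variable {I : Type} {W : Type} [AddCommGroup W] [Module ℂ W]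

/-- Restricted: for each vector `w`, `p_i w = 0` for all but finitely many `i`. -/
def Restricted (ρ : HeisenbergRep I W) : Prop :=
  ∀ w : W, {i : I | ρ.p i w ≠ 0}.Finite

/-- Isomorphism of Heisenberg representations. -/
def Iso {W' : Type} [AddCommGroup W'] [Module ℂ W']
    (ρ : HeisenbergRep I W) (ρ' : HeisenbergRep I W') : Prop :=
  ∃ e : W ≃ₗ[ℂ] W', (∀ i w, e (ρ.p i w) = ρ'.p i (e w)) ∧
    (∀ i w, e (ρ.q i w) = ρ'.q i (e w))

end HeisenbergRep

/-- The category `F`: restricted level-one modules on which every `p_i` is locally finite. -/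
def HeisenbergRep.InCategoryF {I W : Type} [AddCommGroup W] [Module ℂ W]
    (ρ : HeisenbergRep I W) : Prop :=
  ρ.Restricted ∧ ∀ i, (ρ.p i).LocallyFinite

section M1

open MvPolynomial

variable {I : Type}

lemma pderiv_comm' [DecidableEq I] (i j : I) (f : MvPolynomial I ℂ) :
    pderiv i (pderiv j f) = pderiv j (pderiv i f) := by
  induction f using MvPolynomial.induction_on' with
  | monomial s a =>
      simp only [pderiv_monomial]
      by_cases hij : i = j
      · subst hij; rfl
      · have h1 : ((s - Finsupp.single j 1 : I →₀ ℕ)) i = s i := by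
          rw [Finsupp.tsub_apply, Finsupp.single_eq_of_ne hij, tsub_zero]
        have h2 : ((s - Finsupp.single i 1 : I →₀ ℕ)) j = s j := by
          rw [Finsupp.tsub_apply, Finsupp.single_eq_of_ne (Ne.symm hij), tsub_zero]
        rw [h1, h2, tsub_tsub, tsub_tsub, add_comm (Finsupp.single j 1)]
        ring_nf
  | add p q hp hq => simp [hp, hq]

/-- The module `M(1,λ) = e^{λx} ℂ[x_i | i ∈ I]`, modelled on the polynomial ring
(`e^{λx} f ↔ f`), with `p_i = ∂/∂x_i` (which becomes `∂/∂x_i + λ_i` on the polynomial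
part), `q_i` multiplication by `x_i`, and `k = 1`. -/
noncomputable def M1rep [DecidableEq I] (lam : I →₀ ℂ) :
    HeisenbergRep I (MvPolynomial I ℂ) where
  p i := (pderiv i).toLinearMap + lam i • (1 : Module.End ℂ (MvPolynomial I ℂ))
  q i := LinearMap.mulLeft ℂ (X i)
  comm_pp i j := by
    apply LinearMap.ext; intro f
    simp [Module.End.mul_apply, pderiv_comm' i j, smul_eq_C_mul]
    ring
  comm_qq i j := by
    apply LinearMap.ext; intro f
    simp [Module.End.mul_apply]
    ring
  comm_pq_same i := by
    apply LinearMap.ext; intro f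
    simp [Module.End.mul_apply, pderiv_mul, smul_eq_C_mul]
    ring
  comm_pq_ne i j hij := by
    apply LinearMap.ext; intro f
    simp [Module.End.mul_apply, pderiv_mul, pderiv_X_of_ne (Ne.symm hij), smul_eq_C_mul]
    ring

end M1

namespace MvPolynomial

variable {σ R : Type*}

section CommSemiring

variable [CommSemiring R]

theorem totalDegree_pderiv_le (i : σ) (f : MvPolynomial σ R) :
    (pderiv i f).totalDegree ≤ f.totalDegree - 1 := by
  refine Finset.sup_le fun m hm => ?_
  have hcoeff : coeff (m + Finsupp.single i 1) f ≠ 0 := by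
    intro h
    rw [mem_support_iff, coeff_pderiv, h, zero_mul] at hm
    exact hm rfl
  have hdeg := le_totalDegree (mem_support_iff.2 hcoeff)
  rw [Finsupp.sum_add_index' (fun _ => rfl) (fun _ _ _ => rfl),
    Finsupp.sum_single_index rfl] at hdeg
  omega

theorem totalDegree_pderiv_lt {i : σ} {f : MvPolynomial σ R} (h : pderiv i f ≠ 0) :
    (pderiv i f).totalDegree < f.totalDegree := by
  have hf : f.totalDegree ≠ 0 := fun h0 =>
    h (by rw [totalDegree_eq_zero_iff_eq_C.1 h0, pderiv_C])
  have := totalDegree_pderiv_le i f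
  omega

end CommSemiring

theorem eq_C_of_forall_pderiv_eq_zero [CommRing R] [IsDomain R] [CharZero R]
    {f : MvPolynomial σ R} (h : ∀ i, pderiv i f = 0) : f = C (coeff 0 f) := by
  classical
  ext m
  rw [coeff_C]
  split_ifs with hm
  · rw [hm]
  -- `coeff m f * m i = coeff (m - eᵢ) (∂ᵢ f) = 0`, and `m i ≠ 0` in characteristic zero
  obtain ⟨i, hi⟩ : ∃ i, m i ≠ 0 := by simpa [Finsupp.ext_iff] using Ne.symm hm
  have hcoeff := coeff_pderiv (i := i) f (m - Finsupp.single i 1)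
  have hle : Finsupp.single i 1 ≤ m := Finsupp.single_le_iff.2 (Nat.one_le_iff_ne_zero.2 hi)
  rw [h i, coeff_zero, tsub_add_cancel_of_le hle] at hcoeff
  exact (mul_eq_zero.1 hcoeff.symm).resolve_right (Nat.cast_add_one_ne_zero _)

end MvPolynomial

namespace Submodule

open MvPolynomial

variable {σ R : Type*}

theorem one_mem_of_forall_pderiv_mem [Field R] [CharZero R] {T : Submodule R (MvPolynomial σ R)}
    (hT : ∀ i, ∀ f ∈ T, pderiv i f ∈ T) {f : MvPolynomial σ R} (hf : f ∈ T) (hf0 : f ≠ 0) :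
    (1 : MvPolynomial σ R) ∈ T := by
  induction hdeg : f.totalDegree using Nat.strong_induction_on generalizing f with
  | _ n ih =>
    by_cases hder : ∃ i, pderiv i f ≠ 0
    · obtain ⟨i, hi⟩ := hder
      exact ih _ (hdeg ▸ totalDegree_pderiv_lt hi) (hT i f hf) hi rfl
    · push Not at hder
      obtain ⟨c, rfl⟩ : ∃ c, f = C c := ⟨_, eq_C_of_forall_pderiv_eq_zero hder⟩
      have hc : c ≠ 0 := by rintro rfl; exact hf0 C_0
      have hone : c⁻¹ • C c = (1 : MvPolynomial σ R) := by
        rw [smul_eq_C_mul, ← C_mul, inv_mul_cancel₀ hc, C_1]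
      exact hone ▸ T.smul_mem _ hf

theorem eq_top_of_one_mem_of_forall_X_mul_mem [CommSemiring R]
    {T : Submodule R (MvPolynomial σ R)} (hX : ∀ i, ∀ f ∈ T, X i * f ∈ T)
    (h1 : (1 : MvPolynomial σ R) ∈ T) : T = ⊤ := by
  refine eq_top_iff'.2 fun f => ?_
  induction f using MvPolynomial.induction_on with
  | C a => simpa [smul_eq_C_mul] using T.smul_mem a h1
  | add p q hp hq => exact T.add_mem hp hq
  | mul_X p i hp => exact mul_comm (X i) p ▸ hX i p hp

end Submodule

section M1

open MvPolynomial

variable {I : Type} [DecidableEq I] (lam : I →₀ ℂ)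

theorem M1rep_p_apply (i : I) (f : MvPolynomial I ℂ) :
    (M1rep lam).p i f = pderiv i f + lam i • f :=
  rfl

variable {lam}

theorem HeisenbergRep.Stable.pderiv_mem_M1rep {T : Submodule ℂ (MvPolynomial I ℂ)}
    (hT : (M1rep lam).Stable T) (i : I) {f : MvPolynomial I ℂ} (hf : f ∈ T) : pderiv i f ∈ T := by
  have hp := T.sub_mem (hT.1 i f hf) (T.smul_mem (lam i) hf)
  rwa [M1rep_p_apply, add_sub_cancel_right] at hp

end M1

theorem M1rep_isIrreducible_general {I : Type} [DecidableEq I] (lam : I →₀ ℂ) :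
    (M1rep lam).IsIrreducible := by
  refine ⟨⟨fun _ _ _ => Submodule.mem_top, fun _ _ _ => Submodule.mem_top⟩, top_ne_bot,
    fun T hT _ => or_iff_not_imp_left.2 fun hne => ?_⟩
  obtain ⟨f, hf, hf0⟩ := (Submodule.ne_bot_iff T).1 hne
  have h1 : (1 : MvPolynomial I ℂ) ∈ T :=
    T.one_mem_of_forall_pderiv_mem (fun i _ hg => hT.pderiv_mem_M1rep i hg) hf hf0
  exact T.eq_top_of_one_mem_of_forall_X_mul_mem (fun i g hg => hT.2 i g hg) h1

/-- `M(1,λ)` is an irreducible module over the Heisenberg Lie algebra `H_I`. -/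
theorem M1rep_isIrreducible {I : Type} [Nonempty I] [DecidableEq I] (lam : I →₀ ℂ) :
    (M1rep lam).IsIrreducible :=
  M1rep_isIrreducible_general lam
end

section
/- Let I_0 be a nonempty finite set and μ : I_0 → ℂ a function with μ_i ∉ ℤ for all i. Then the space M_*[μ] = x^μ ℂ[x_i^{±1} | i ∈ I_0], with p_i acting as the formal partial derivative ∂/∂x_i, q_i as multiplication by x_i, and k as the identity, is an irreducible H_{I_0}-module; moreover every q_i p_i acts semisimply on it, and p_i w ≠ 0 and q_i w ≠ 0 for all nonzero w and all i ∈ I_0. -/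
section Laurent

variable {I₀ : Type} [DecidableEq I₀]

/-- The action of `p_i = ∂/∂x_i` on `M_*[μ] = x^μ ℂ[x_i^{±1}]`, in the model where the
basis vector `x^{μ+m}` (for `m : I₀ → ℤ`) is the finitely supported function `δ_m`:
`∂/∂x_i · x^{μ+m} = (μ_i + m_i) x^{μ+m} x_i^{-1}`. -/
noncomputable def laurentP (mu : I₀ → ℂ) (i : I₀) :
    Module.End ℂ ((I₀ → ℤ) →₀ ℂ) :=
  Finsupp.lsum ℂ fun m : I₀ → ℤ =>
    (mu i + (m i : ℂ)) • Finsupp.lsingle (Function.update m i (m i - 1))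

/-- The action of `q_i = x_i` on `M_*[μ]`: `x_i · x^{μ+m} = x^{μ+m+e_i}`. -/
noncomputable def laurentQ (i : I₀) : Module.End ℂ ((I₀ → ℤ) →₀ ℂ) :=
  Finsupp.lsum ℂ fun m : I₀ → ℤ =>
    (Finsupp.lsingle (Function.update m i (m i + 1)) : ℂ →ₗ[ℂ] (I₀ → ℤ) →₀ ℂ)

end Laurent

theorem Set.eq_univ_of_forall_add_single_mem_iff {ι : Type*} [Finite ι] [DecidableEq ι]
    {S : Set (ι → ℤ)} (hS : ∀ i x, x + Pi.single i 1 ∈ S ↔ x ∈ S) (hne : S.Nonempty) :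
    S = Set.univ := by
  have hclosure : AddSubgroup.closure (Set.range fun i : ι => Pi.single i (1 : ℤ)) = ⊤ := by
    rw [← Submodule.span_int_eq_addSubgroupClosure,
      show (fun i : ι => Pi.single i (1 : ℤ)) = Pi.basisFun ℤ ι by ext; simp,
      (Pi.basisFun ℤ ι).span_eq, Submodule.top_toAddSubgroup]
  have htrans : ∀ d x, x + d ∈ S ↔ x ∈ S := fun d => by
    have hd : d ∈ AddSubgroup.closure (Set.range fun i : ι => Pi.single i (1 : ℤ)) :=
      hclosure ▸ AddSubgroup.mem_top d
    induction hd using AddSubgroup.closure_induction with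
    | mem _ h => obtain ⟨i, rfl⟩ := h; exact hS i
    | zero => simp
    | add d e _ _ hd he => intro x; rw [← add_assoc, he, hd]
    | neg d _ hd => intro x; rw [← hd (x + -d), neg_add_cancel_right]
  obtain ⟨x, hx⟩ := hne
  exact Set.eq_univ_of_forall fun y => by simpa using (htrans (y - x) x).2 hx

section Diagonal

variable {K α : Type*} [Field K]

theorem Finsupp.iSup_eigenspace_eq_top_of_apply_eq_mul {D : Module.End K (α →₀ K)} {f : α → K}
    (hD : ∀ w n, D w n = f n * w n) : ⨆ c, Module.End.eigenspace D c = ⊤ := by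
  classical
  refine eq_top_iff.mpr fun w _ => ?_
  induction w using Finsupp.induction_linear with
  | zero => exact zero_mem _
  | add v w hv hw => exact add_mem (hv trivial) (hw trivial)
  | single m c =>
    refine Submodule.mem_iSup_of_mem (f m) (Module.End.mem_eigenspace_iff.mpr ?_)
    ext n
    rcases eq_or_ne m n with rfl | h
    · simp [hD]
    · simp [hD, h]

theorem Finsupp.single_mem_of_apply_eq_mul {ι : Type*} {D : ι → Module.End K (α →₀ K)}
    {f : ι → α → K} (hD : ∀ i w n, D i w n = f i n * w n)
    (hf : ∀ m n, m ≠ n → ∃ i, f i m ≠ f i n) {T : Submodule K (α →₀ K)}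
    (hT : ∀ i, ∀ w ∈ T, D i w ∈ T) {w : α →₀ K} (hw : w ∈ T) (n : α) :
    Finsupp.single n (w n) ∈ T := by
  classical
  have hcut : ∀ s : Finset α, n ∉ s →
      ∃ v ∈ T, v n = w n ∧ ∀ k, k ∈ s ∨ w k = 0 → v k = 0 := by
    intro s
    induction s using Finset.induction_on with
    | empty => exact fun _ => ⟨w, hw, rfl, fun k hk => by simpa using hk⟩
    | insert m s _ ih =>
      intro hn
      obtain ⟨v, hvT, hvn, hv⟩ := ih (fun h => hn (Finset.mem_insert_of_mem h))
      obtain ⟨i, hi⟩ := hf n m (fun h => hn (h ▸ Finset.mem_insert_self n s))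
      have hc : f i n - f i m ≠ 0 := sub_ne_zero.mpr hi
      refine ⟨(f i n - f i m)⁻¹ • (D i v - f i m • v),
        T.smul_mem _ (sub_mem (hT i v hvT) (T.smul_mem _ hvT)), ?_, fun k hk => ?_⟩
      · simp [hD, hvn, ← sub_mul, hc]
      · simp only [Finsupp.smul_apply, Finsupp.sub_apply, hD, smul_eq_mul, ← sub_mul]
        rcases eq_or_ne k m with rfl | hkm
        · simp
        · rw [hv k (by simpa [hkm] using hk), mul_zero, mul_zero]
  obtain ⟨v, hvT, hvn, hv⟩ := hcut (w.support.erase n) (Finset.notMem_erase n _)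
  convert hvT
  ext k
  rcases eq_or_ne k n with rfl | hkn
  · simp [hvn]
  · rw [Finsupp.single_eq_of_ne hkn, hv k]
    by_cases hk : w k = 0 <;> simp [hk, hkn]

end Diagonal

theorem Function.update_add_eq_add_single {ι M : Type*} [DecidableEq ι] [AddGroup M]
    (m : ι → M) (i : ι) (a : M) : Function.update m i (m i + a) = m + Pi.single i a := by
  funext j
  rcases eq_or_ne j i with rfl | h <;> simp [*]

theorem Function.update_sub_eq_sub_single {ι M : Type*} [DecidableEq ι] [AddGroup M]
    (m : ι → M) (i : ι) (a : M) : Function.update m i (m i - a) = m - Pi.single i a := by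
  funext j
  rcases eq_or_ne j i with rfl | h <;> simp [*]

section Laurent

variable {I₀ : Type} [DecidableEq I₀] (mu : I₀ → ℂ)

theorem laurentP_single (i : I₀) (m : I₀ → ℤ) (c : ℂ) :
    laurentP mu i (Finsupp.single m c) = (mu i + m i) • Finsupp.single (m - Pi.single i 1) c := by
  simp [laurentP, Function.update_sub_eq_sub_single]

theorem laurentQ_single (i : I₀) (m : I₀ → ℤ) (c : ℂ) :
    laurentQ i (Finsupp.single m c) = Finsupp.single (m + Pi.single i 1) c := by
  simp [laurentQ, Function.update_add_eq_add_single]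

theorem laurentP_apply (i : I₀) (w : (I₀ → ℤ) →₀ ℂ) (n : I₀ → ℤ) :
    laurentP mu i w n = (mu i + n i + 1) * w (n + Pi.single i 1) := by
  induction w using Finsupp.induction_linear with
  | zero => simp
  | add v w hv hw => simp [hv, hw, mul_add]
  | single m c =>
    rw [laurentP_single]
    rcases eq_or_ne m (n + Pi.single i 1) with rfl | h
    · simp [add_assoc]
    · simp [sub_eq_iff_eq_add, h]

theorem laurentQ_apply (i : I₀) (w : (I₀ → ℤ) →₀ ℂ) (n : I₀ → ℤ) :
    laurentQ i w n = w (n - Pi.single i 1) := by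
  induction w using Finsupp.induction_linear with
  | zero => simp
  | add v w hv hw => simp [hv, hw]
  | single m c =>
    classical
    simp only [laurentQ_single, Finsupp.single_apply, eq_sub_iff_add_eq]

theorem laurentQ_mul_laurentP_apply (i : I₀) (w : (I₀ → ℤ) →₀ ℂ) (n : I₀ → ℤ) :
    (laurentQ i * laurentP mu i) w n = (mu i + n i) * w n := by
  simp [laurentQ_apply, laurentP_apply, add_assoc]

theorem commute_laurentP (i j : I₀) : Commute (laurentP mu i) (laurentP mu j) :=
  LinearMap.ext fun w => Finsupp.ext fun n => by
    rcases eq_or_ne i j with rfl | h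
    · rfl
    · simp [laurentP_apply, h, h.symm, add_right_comm n, mul_left_comm]

theorem commute_laurentQ (i j : I₀) : Commute (laurentQ i) (laurentQ j) :=
  LinearMap.ext fun w => Finsupp.ext fun n => by
    simp [laurentQ_apply, sub_right_comm n]

theorem laurentP_mul_laurentQ_sub (i : I₀) :
    laurentP mu i * laurentQ i - laurentQ i * laurentP mu i = 1 :=
  LinearMap.ext fun w => Finsupp.ext fun n => by
    rw [LinearMap.sub_apply, Finsupp.sub_apply, laurentQ_mul_laurentP_apply, Module.End.mul_apply,
      laurentP_apply, laurentQ_apply, add_sub_cancel_right, Module.End.one_apply]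
    ring

theorem commute_laurentP_laurentQ_of_ne {i j : I₀} (h : i ≠ j) :
    Commute (laurentP mu i) (laurentQ j) :=
  LinearMap.ext fun w => Finsupp.ext fun n => by
    simp [laurentQ_apply, laurentP_apply, h, add_sub_right_comm n]

@[simps]
noncomputable def laurentRep : HeisenbergRep I₀ ((I₀ → ℤ) →₀ ℂ) where
  p := laurentP mu
  q := laurentQ
  comm_pp := commute_laurentP mu
  comm_qq := commute_laurentQ
  comm_pq_same := laurentP_mul_laurentQ_sub mu
  comm_pq_ne _ _ := commute_laurentP_laurentQ_of_ne mu

theorem laurentQ_injective (i : I₀) : Function.Injective (laurentQ (I₀ := I₀) i) :=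
  (injective_iff_map_eq_zero _).2 fun w hw => Finsupp.ext fun n => by
    have h := DFunLike.congr_fun hw (n + Pi.single i 1)
    rwa [laurentQ_apply, add_sub_cancel_right] at h

variable {mu}

theorem add_intCast_ne_zero_of_forall_ne_intCast {z : ℂ} (hz : ∀ n : ℤ, z ≠ n) (n : ℤ) :
    z + n ≠ 0 := by
  simpa [add_eq_zero_iff_eq_neg] using hz (-n)

theorem laurentP_injective {i : I₀} (hmu : ∀ n : ℤ, mu i ≠ n) :
    Function.Injective (laurentP mu i) :=
  (injective_iff_map_eq_zero _).2 fun w hw => Finsupp.ext fun n => by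
    have h := laurentQ_mul_laurentP_apply mu i w n
    rw [Module.End.mul_apply, hw, map_zero, Finsupp.coe_zero, Pi.zero_apply, eq_comm] at h
    exact (mul_eq_zero.mp h).resolve_left (add_intCast_ne_zero_of_forall_ne_intCast hmu _)

end Laurent

section Irreducible

variable {I₀ : Type} [Fintype I₀] [DecidableEq I₀] {mu : I₀ → ℂ}

theorem laurentRep_eq_top_of_single_mem (hmu : ∀ i, ∀ n : ℤ, mu i ≠ n)
    {T : Submodule ℂ ((I₀ → ℤ) →₀ ℂ)} (hT : (laurentRep mu).Stable T) {m : I₀ → ℤ}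
    (hm : Finsupp.single m 1 ∈ T) : T = ⊤ := by
  have hshift : ∀ i x, Finsupp.single (x + Pi.single i 1) (1 : ℂ) ∈ T ↔
      Finsupp.single x 1 ∈ T := by
    intro i x
    refine ⟨fun hx => ?_, fun hx => by simpa [laurentQ_single] using hT.2 i _ hx⟩
    have h := hT.1 i _ hx
    rw [laurentRep_p, laurentP_single, add_sub_cancel_right] at h
    exact (T.smul_mem_iff (add_intCast_ne_zero_of_forall_ne_intCast (hmu i) _)).mp h
  have hall :=
    Set.eq_univ_of_forall_add_single_mem_iff (S := {x | Finsupp.single x 1 ∈ T}) hshift ⟨m, hm⟩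
  rw [eq_top_iff, ← Finsupp.basisSingleOne.span_eq, Submodule.span_le, Finsupp.coe_basisSingleOne]
  rintro _ ⟨x, rfl⟩
  exact Set.eq_univ_iff_forall.mp hall x

theorem laurentRep_isIrreducible (hmu : ∀ i, ∀ n : ℤ, mu i ≠ n) :
    (laurentRep mu).IsIrreducible := by
  refine ⟨⟨fun _ _ _ => trivial, fun _ _ _ => trivial⟩, top_ne_bot, fun T hT _ => ?_⟩
  rcases eq_or_ne T ⊥ with hbot | hbot
  · exact .inl hbot
  obtain ⟨w, hwT, hw⟩ := Submodule.exists_mem_ne_zero_of_ne_bot hbot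
  obtain ⟨n, hn⟩ := Finsupp.ne_iff.mp hw
  have hsep : ∀ m n : I₀ → ℤ, m ≠ n → ∃ i, mu i + m i ≠ mu i + n i := fun m n h => by
    obtain ⟨i, hi⟩ := Function.ne_iff.mp h
    exact ⟨i, by simpa using hi⟩
  have hsingle : Finsupp.single n (w n) ∈ T :=
    Finsupp.single_mem_of_apply_eq_mul (laurentQ_mul_laurentP_apply mu) hsep
      (fun i v hv => hT.2 i _ (hT.1 i v hv)) hwT n
  rw [← Finsupp.smul_single_one, T.smul_mem_iff hn] at hsingle
  exact .inr (laurentRep_eq_top_of_single_mem hmu hT hsingle)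

end Irreducible

open Module.End in
theorem laurent_module_irreducible_general
    {I₀ : Type} [Fintype I₀] [DecidableEq I₀]
    (mu : I₀ → ℂ) (hmu : ∀ i, ∀ n : ℤ, mu i ≠ (n : ℂ)) :
    ∃ ρ : HeisenbergRep I₀ ((I₀ → ℤ) →₀ ℂ),
      (∀ i, ρ.p i = laurentP mu i) ∧ (∀ i, ρ.q i = laurentQ i) ∧
      ρ.IsIrreducible ∧
      (∀ i, ⨆ c : ℂ, Module.End.eigenspace (ρ.q i * ρ.p i) c = ⊤) ∧
      (∀ i, ∀ w : (I₀ → ℤ) →₀ ℂ, w ≠ 0 → ρ.p i w ≠ 0 ∧ ρ.q i w ≠ 0) :=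
  ⟨laurentRep mu, fun _ => rfl, fun _ => rfl, laurentRep_isIrreducible hmu,
    fun i => Finsupp.iSup_eigenspace_eq_top_of_apply_eq_mul (laurentQ_mul_laurentP_apply mu i),
    fun i _ hw => ⟨(laurentP_injective (hmu i)).ne_iff' (map_zero _) |>.mpr hw,
      (laurentQ_injective i).ne_iff' (map_zero _) |>.mpr hw⟩⟩

open Module.End in
/-- For a nonempty finite set `I₀` and `μ : I₀ → ℂ` with no `μ_i` an integer, the space
`M_*[μ] = x^μ ℂ[x_i^{±1}]` with `p_i = ∂/∂x_i`, `q_i = x_i`, `k = 1` is an irreducible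
level-one `H_{I₀}`-module; moreover each `q_i p_i` acts semisimply on it, and
`p_i w ≠ 0` and `q_i w ≠ 0` for every nonzero `w` and every `i`. -/
theorem laurent_module_irreducible
    {I₀ : Type} [Fintype I₀] [Nonempty I₀] [DecidableEq I₀]
    (mu : I₀ → ℂ) (hmu : ∀ i, ∀ n : ℤ, mu i ≠ (n : ℂ)) :
    ∃ ρ : HeisenbergRep I₀ ((I₀ → ℤ) →₀ ℂ),
      (∀ i, ρ.p i = laurentP mu i) ∧ (∀ i, ρ.q i = laurentQ i) ∧
      ρ.IsIrreducible ∧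
      (∀ i, ⨆ c : ℂ, Module.End.eigenspace (ρ.q i * ρ.p i) c = ⊤) ∧
      (∀ i, ∀ w : (I₀ → ℤ) →₀ ℂ, w ≠ 0 → ρ.p i w ≠ 0 ∧ ρ.q i w ≠ 0) :=
  laurent_module_irreducible_general mu hmu
end

section
/- Let I_0 be a nonempty finite set. Every irreducible level-1 H_{I_0}-module W satisfying Condition C_{I_0} (each q_i p_i is semisimple, and p_i w ≠ 0, q_i w ≠ 0 for all nonzero w) is isomorphic to M_*[μ] for some μ : I_0 → ℂ with μ_i ∉ ℤ for all i. -/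
/-! Condition C makes every Euler operator `q_i p_i` injective; being diagonalizable it is then
bijective, so every `q_i` is invertible and the Laurent monomials `x^m = ∏ q_i ^ m_i`
(`m : I₀ → ℤ`) act on `W`. The commuting diagonalizable operators `q_i p_i` have a common
eigenvector `w`, with eigenvalues `μ_i` say. Since `q_i p_i` shifts by one under conjugation by
`q_i`, the vectors `x^m w` are common eigenvectors with the pairwise distinct eigenvalue tuples
`μ + m`, hence linearly independent, and `p_i`, `q_i` act on them exactly as on the basis
`x^(μ+m)` of `M_*[μ]`; so their span is a nonzero stable submodule, which is `W` by
irreducibility. Finally each `μ_i + m_i` is an eigenvalue of the injective operator `q_i p_i`,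
so it is nonzero and `μ_i ∉ ℤ`. -/

namespace Module.End

variable {K V : Type*} [Field K] [AddCommGroup V] [Module K V]

lemma surjective_of_iSup_eigenspace_eq_top {f : End K V} (hf : ⨆ c, f.eigenspace c = ⊤)
    (hinj : Function.Injective f) : Function.Surjective f := by
  refine LinearMap.range_eq_top.mp (eq_top_iff.mpr (hf ▸ iSup_le fun c x hx => ?_))
  rw [mem_eigenspace_iff] at hx
  rcases eq_or_ne c 0 with rfl | hc
  · rw [zero_smul, ← map_zero f] at hx
    exact hinj hx ▸ Submodule.zero_mem _
  · exact ⟨c⁻¹ • x, by rw [map_smul, hx, inv_smul_smul₀ hc]⟩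

lemma exists_inf_eigenspace_ne_bot {f : End K V} (hf : ⨆ c, f.eigenspace c = ⊤)
    {p : Submodule K V} (hp : ∀ x ∈ p, f x ∈ p) (hp₀ : p ≠ ⊥) :
    ∃ c, p ⊓ f.eigenspace c ≠ ⊥ := by
  classical
  suffices key : ∀ s : Finset K, ∀ x ∈ p, x ≠ 0 → x ∈ ⨆ c ∈ s, f.eigenspace c →
      ∃ c, p ⊓ f.eigenspace c ≠ ⊥ by
    obtain ⟨x, hxp, hx₀⟩ := Submodule.exists_mem_ne_zero_of_ne_bot hp₀
    obtain ⟨s, hs⟩ :=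
      Submodule.mem_iSup_iff_exists_finset.mp (hf ▸ Submodule.mem_top : x ∈ _)
    exact key s x hxp hx₀ hs
  intro s
  induction s using Finset.induction_on with
  | empty => simp +contextual
  | insert c₀ s _ ih =>
    intro x hxp hx₀ hx
    rw [Finset.iSup_insert, Submodule.mem_sup] at hx
    obtain ⟨y, hy, z, hz, rfl⟩ := hx
    -- `f - c₀` kills the `c₀`-component of `y + z` and keeps it inside `p`
    set g := f - algebraMap K (End K V) c₀
    have hgy : g y = 0 := by simpa [g, sub_eq_zero] using mem_eigenspace_iff.mp hy
    have hgz : g z ∈ ⨆ c ∈ s, f.eigenspace c := by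
      refine (iSup₂_le fun c hc v hv => ?_ : _ ≤ (⨆ c ∈ s, f.eigenspace c).comap g) hz
      have hgv : g v = (c - c₀) • v := by simp [g, mem_eigenspace_iff.mp hv, sub_smul]
      rw [Submodule.mem_comap, hgv]
      exact le_iSup₂ (f := fun c _ => f.eigenspace c) c hc ((f.eigenspace c).smul_mem _ hv)
    by_cases hg : g (y + z) = 0
    · refine ⟨c₀, (Submodule.ne_bot_iff _).mpr ⟨y + z, ⟨hxp, ?_⟩, hx₀⟩⟩
      simpa [g, sub_eq_zero] using hg
    · refine ih (g (y + z)) ?_ hg (by rwa [map_add, hgy, zero_add])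
      exact p.sub_mem (hp _ hxp) (p.smul_mem c₀ hxp)

lemma exists_iInf_eigenspace_ne_bot [Nontrivial V] {ι : Type*} [Finite ι] {f : ι → End K V}
    (hf : ∀ i, ⨆ c, (f i).eigenspace c = ⊤) (hcomm : ∀ i j, Commute (f i) (f j)) :
    ∃ χ : ι → K, ⨅ i, (f i).eigenspace (χ i) ≠ ⊥ := by
  classical
  have := Fintype.ofFinite ι
  suffices key : ∀ s : Finset ι, ∃ χ : ι → K,
      ⨅ i ∈ s, (f i).eigenspace (χ i) ≠ ⊥ by
    simpa using key Finset.univ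
  intro s
  induction s using Finset.induction_on with
  | empty => exact ⟨0, by simp⟩
  | insert j s hj ih =>
    obtain ⟨χ, hχ⟩ := ih
    obtain ⟨c, hc⟩ := exists_inf_eigenspace_ne_bot (hf j)
      (fun x hx => by
        simp only [Submodule.mem_iInf] at hx ⊢
        exact fun i hi => mapsTo_genEigenspace_of_comm (hcomm i j) _ 1 (hx i hi)) hχ
    refine ⟨Function.update χ j c, ?_⟩
    rwa [Finset.iInf_insert, Function.update_self, inf_comm, iInf_congr fun i => iInf_congr
      fun hi => by rw [Function.update_of_ne (ne_of_mem_of_not_mem hi hj)]]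

lemma linearIndependent_of_apply_eq_smul {ι κ : Type*} {f : ι → End K V}
    (hcomm : ∀ i j, Commute (f i) (f j)) {v : κ → V} {χ : κ → ι → K}
    (hχ : Function.Injective χ) (hv : ∀ k i, f i (v k) = χ k i • v k)
    (hv₀ : ∀ k, v k ≠ 0) :
    LinearIndependent K v := by
  refine iSupIndep.linearIndependent _
    ((independent_iInf_maxGenEigenspace_of_forall_mapsTo f
      fun i j c => mapsTo_maxGenEigenspace_of_comm (hcomm j i) c).comp hχ) (fun k => ?_) hv₀
  exact Submodule.mem_iInf _ |>.mpr fun i =>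
    eigenspace_le_maxGenEigenspace (mem_eigenspace_iff.mpr (hv k i))

end Module.End

lemma mul_units_zpow_of_mul_eq_mul_add_one {R : Type*} [Ring R] {a : R} {u : Rˣ}
    (h : a * u = u * (a + 1)) (n : ℤ) : a * ↑(u ^ n) = ↑(u ^ n) * (a + n) := by
  have h' : a * ↑u⁻¹ = ↑u⁻¹ * (a - 1) := by
    rw [Units.eq_inv_mul_iff_mul_eq, ← mul_assoc,
      show (u : R) * a = a * u - u by rw [h]; noncomm_ring, sub_mul, mul_assoc, Units.mul_inv,
      mul_one]
  induction n using Int.induction_on with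
  | zero => simp
  | succ n ih =>
    rw [zpow_add_one, Units.val_mul, ← mul_assoc, ih, mul_assoc, add_mul, h,
      (Int.cast_commute (n : ℤ) (u : R)).eq]
    push_cast
    noncomm_ring
  | pred n ih =>
    rw [zpow_sub_one, Units.val_mul, ← mul_assoc, ih, mul_assoc, add_mul, h',
      (Int.cast_commute (-(n : ℤ)) (↑u⁻¹ : R)).eq]
    push_cast
    noncomm_ring

lemma mulSingle_ofAdd_mul_comp {I : Type*} [DecidableEq I] (i : I) (n : ℤ) (m : I → ℤ) :
    Pi.mulSingle i (Multiplicative.ofAdd n) * Multiplicative.ofAdd ∘ m =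
      Multiplicative.ofAdd ∘ Function.update m i (m i + n) := by
  ext j
  rcases eq_or_ne j i with rfl | h <;> simp [*, add_comm]

namespace HeisenbergRep

variable {I W : Type} [AddCommGroup W] [Module ℂ W] (ρ : HeisenbergRep I W)

def euler (i : I) : Module.End ℂ W := ρ.q i * ρ.p i

lemma p_mul_q (i : I) : ρ.p i * ρ.q i = ρ.euler i + 1 :=
  sub_eq_iff_eq_add'.mp (ρ.comm_pq_same i)

lemma euler_mul_q (i : I) : ρ.euler i * ρ.q i = ρ.q i * (ρ.euler i + 1) := by
  rw [euler, mul_assoc, p_mul_q]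
  rfl

lemma commute_euler_q {i j : I} (h : i ≠ j) : Commute (ρ.euler i) (ρ.q j) :=
  (ρ.comm_qq i j).mul_left (ρ.comm_pq_ne i j h)

lemma commute_euler_p {i j : I} (h : i ≠ j) : Commute (ρ.euler i) (ρ.p j) :=
  (ρ.comm_pq_ne j i h.symm).symm.mul_left (ρ.comm_pp i j)

lemma commute_euler_euler (i j : I) : Commute (ρ.euler i) (ρ.euler j) := by
  rcases eq_or_ne i j with rfl | h
  · exact Commute.refl _
  · exact (ρ.commute_euler_q h).mul_right (ρ.commute_euler_p h)

lemma isUnit_q {i : I} (hss : ⨆ c, (ρ.euler i).eigenspace c = ⊤)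
    (hp : Function.Injective (ρ.p i)) (hq : Function.Injective (ρ.q i)) : IsUnit (ρ.q i) :=
  (Module.End.isUnit_iff _).mpr ⟨hq,
    (Module.End.surjective_of_iSup_eigenspace_eq_top hss (hq.comp hp)).of_comp (g := ρ.p i)⟩

section qMonomial

open Multiplicative

variable {ρ} (hq : ∀ i, IsUnit (ρ.q i))

lemma pairwise_commute_zpowersHom_q :
    Pairwise fun i j => ∀ x y : Multiplicative ℤ,
      Commute (zpowersHom _ (hq i).unit x) (zpowersHom _ (hq j).unit y) := by
  intro i j _ x y
  simpa only [zpowersHom_apply] using (Commute.units_of_val (ρ.comm_qq i j)).zpow_zpow _ _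

variable [Fintype I] [DecidableEq I]

/-- The action of the Laurent monomial `x^m = ∏ q_i ^ m_i`. -/
noncomputable def qMonomial : (I → Multiplicative ℤ) →* (Module.End ℂ W)ˣ :=
  MonoidHom.noncommPiCoprod _ (pairwise_commute_zpowersHom_q hq)

lemma qMonomial_mulSingle (i : I) (x : Multiplicative ℤ) :
    qMonomial hq (Pi.mulSingle i x) = (hq i).unit ^ x.toAdd := by
  rw [qMonomial, MonoidHom.noncommPiCoprod_mulSingle, zpowersHom_apply]

lemma q_mul_qMonomial (i : I) (g : I → Multiplicative ℤ) :
    ρ.q i * qMonomial hq g = qMonomial hq (Pi.mulSingle i (ofAdd 1) * g) := by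
  rw [map_mul, Units.val_mul, qMonomial_mulSingle, toAdd_ofAdd, zpow_one, IsUnit.unit_spec]

lemma euler_mul_qMonomial (i : I) (g : I → Multiplicative ℤ) :
    ρ.euler i * qMonomial hq g = qMonomial hq g * (ρ.euler i + (g i).toAdd) := by
  rw [← Finset.univ_prod_mulSingle g]
  refine Finset.prod_induction _ (fun g => ρ.euler i * qMonomial hq g =
      qMonomial hq g * (ρ.euler i + (g i).toAdd)) (fun g h hg hh => ?_) (by simp) (fun j _ => ?_)
  · rw [map_mul, Units.val_mul, ← mul_assoc, hg, mul_assoc, add_mul, hh,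
      (Int.cast_commute (g i).toAdd _).eq, Pi.mul_apply, toAdd_mul]
    push_cast
    noncomm_ring
  · rw [qMonomial_mulSingle]
    rcases eq_or_ne i j with rfl | hij
    · rw [Pi.mulSingle_eq_same]
      exact mul_units_zpow_of_mul_eq_mul_add_one (by rw [IsUnit.unit_spec, euler_mul_q]) _
    · rw [Pi.mulSingle_eq_of_ne hij, toAdd_one, Int.cast_zero, add_zero]
      exact (Commute.units_zpow_right (by rw [IsUnit.unit_spec]; exact ρ.commute_euler_q hij) _).eq

lemma p_mul_qMonomial (i : I) (g : I → Multiplicative ℤ) :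
    ρ.p i * qMonomial hq g =
      qMonomial hq (Pi.mulSingle i (ofAdd (-1)) * g) * (ρ.euler i + (g i).toAdd) := by
  have hp : ρ.p i = (ρ.euler i + 1) * ↑((hq i).unit⁻¹) := by
    rw [← p_mul_q, mul_assoc, IsUnit.mul_val_inv, mul_one]
  rw [hp, mul_assoc, ← Units.val_mul, ← zpow_neg_one, ← toAdd_ofAdd (-1 : ℤ),
    ← qMonomial_mulSingle, ← map_mul, add_mul, euler_mul_qMonomial, Pi.mul_apply,
    Pi.mulSingle_eq_same, toAdd_mul, toAdd_ofAdd]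
  push_cast
  noncomm_ring

end qMonomial

section LaurentModel

open Multiplicative

variable [Fintype I] {ρ} (hq : ∀ i, IsUnit (ρ.q i)) (w : W)

/-- The vector playing the role of `x^(μ+m)` when `w` plays the role of `x^μ`. -/
noncomputable def monomialVec (m : I → ℤ) : W :=
  (qMonomial hq (ofAdd ∘ m) : Module.End ℂ W) w

variable {w} in
lemma monomialVec_ne_zero (hw₀ : w ≠ 0) (m : I → ℤ) : monomialVec hq w m ≠ 0 :=
  ((Module.End.isUnit_iff _).mp (qMonomial hq _).isUnit).injective.ne_iff' (map_zero _) |>.mpr hw₀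

variable [DecidableEq I]

noncomputable def laurentMap : ((I → ℤ) →₀ ℂ) →ₗ[ℂ] W :=
  Finsupp.linearCombination ℂ (monomialVec hq w)

lemma q_monomialVec (i : I) (m : I → ℤ) :
    ρ.q i (monomialVec hq w m) = monomialVec hq w (Function.update m i (m i + 1)) := by
  rw [monomialVec, monomialVec, ← Module.End.mul_apply, q_mul_qMonomial, mulSingle_ofAdd_mul_comp]

variable {w}

lemma laurentMap_laurentQ (i : I) (f : (I → ℤ) →₀ ℂ) :
    laurentMap hq w (laurentQ i f) = ρ.q i (laurentMap hq w f) := by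
  suffices (laurentMap hq w).comp (laurentQ i) = ρ.q i ∘ₗ laurentMap hq w from
    LinearMap.congr_fun this f
  refine Finsupp.lhom_ext fun m c => ?_
  simp [laurentMap, laurentQ, q_monomialVec]

variable {μ : I → ℂ} (hw : ∀ i, ρ.euler i w = μ i • w)
include hw

lemma euler_monomialVec (i : I) (m : I → ℤ) :
    ρ.euler i (monomialVec hq w m) = (μ i + m i) • monomialVec hq w m := by
  rw [monomialVec, ← Module.End.mul_apply, euler_mul_qMonomial, Module.End.mul_apply,
    LinearMap.add_apply, Module.End.intCast_apply, hw, Function.comp_apply, toAdd_ofAdd,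
    ← Int.cast_smul_eq_zsmul ℂ, ← add_smul, map_smul]

lemma p_monomialVec (i : I) (m : I → ℤ) :
    ρ.p i (monomialVec hq w m) =
      (μ i + m i) • monomialVec hq w (Function.update m i (m i - 1)) := by
  rw [monomialVec, monomialVec, ← Module.End.mul_apply, p_mul_qMonomial, Module.End.mul_apply,
    LinearMap.add_apply, Module.End.intCast_apply, hw, Function.comp_apply, toAdd_ofAdd,
    ← Int.cast_smul_eq_zsmul ℂ, ← add_smul, map_smul, mulSingle_ofAdd_mul_comp,
    sub_eq_add_neg]

include hq in
lemma eigenvalue_ne_intCast (hinj : ∀ i, Function.Injective (ρ.euler i)) (hw₀ : w ≠ 0)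
    (i : I) (n : ℤ) : μ i ≠ n := by
  intro h
  apply monomialVec_ne_zero hq hw₀ (fun _ => -n)
  apply hinj i
  rw [euler_monomialVec hq hw, h, Int.cast_neg, add_neg_cancel, zero_smul, map_zero]

lemma laurentMap_laurentP (i : I) (f : (I → ℤ) →₀ ℂ) :
    laurentMap hq w (laurentP μ i f) = ρ.p i (laurentMap hq w f) := by
  suffices (laurentMap hq w).comp (laurentP μ i) = ρ.p i ∘ₗ laurentMap hq w from
    LinearMap.congr_fun this f
  refine Finsupp.lhom_ext fun m c => ?_
  rw [LinearMap.comp_apply, laurentP, Finsupp.lsum_single, LinearMap.smul_apply,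
    Finsupp.lsingle_apply, map_smul, LinearMap.comp_apply, laurentMap,
    Finsupp.linearCombination_single, Finsupp.linearCombination_single, map_smul,
    p_monomialVec hq hw, smul_comm]

lemma injective_laurentMap (hw₀ : w ≠ 0) : Function.Injective (laurentMap hq w) := by
  refine linearIndependent_iff_injective_finsuppLinearCombination.mp ?_
  refine Module.End.linearIndependent_of_apply_eq_smul ρ.commute_euler_euler
    (χ := fun m i => μ i + m i) (fun m m' h => ?_) (fun m i => euler_monomialVec hq hw i m)
    (monomialVec_ne_zero hq hw₀)
  funext i
  exact_mod_cast add_left_cancel (congrFun h i)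

lemma surjective_laurentMap (hirr : ρ.IsIrreducible) (hw₀ : w ≠ 0) :
    Function.Surjective (laurentMap hq w) := by
  have hstable : ρ.Stable (LinearMap.range (laurentMap hq w)) := by
    constructor <;> rintro i - ⟨f, rfl⟩
    exacts [⟨_, laurentMap_laurentP hq hw i f⟩, ⟨_, laurentMap_laurentQ hq i f⟩]
  refine LinearMap.range_eq_top.mp ((hirr.2.2 _ hstable le_top).resolve_left fun h => hw₀ ?_)
  have : monomialVec hq w 0 ∈ LinearMap.range (laurentMap hq w) :=
    ⟨Finsupp.single 0 1, by simp [laurentMap]⟩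
  simpa [h, monomialVec] using this

end LaurentModel

end HeisenbergRep

theorem conditionC_classification_general
    {I₀ W : Type} [Fintype I₀] [DecidableEq I₀]
    [AddCommGroup W] [Module ℂ W]
    (ρ : HeisenbergRep I₀ W) (hirr : ρ.IsIrreducible)
    (hss : ∀ i, ⨆ c : ℂ, Module.End.eigenspace (ρ.q i * ρ.p i) c = ⊤)
    (hnz : ∀ i, ∀ w : W, w ≠ 0 → ρ.p i w ≠ 0 ∧ ρ.q i w ≠ 0) :
    ∃ mu : I₀ → ℂ, (∀ i, ∀ n : ℤ, mu i ≠ (n : ℂ)) ∧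
      ∃ e : ((I₀ → ℤ) →₀ ℂ) ≃ₗ[ℂ] W,
        (∀ i f, e (laurentP mu i f) = ρ.p i (e f)) ∧
        (∀ i f, e (laurentQ i f) = ρ.q i (e f)) := by
  have hp i : Function.Injective (ρ.p i) :=
    (injective_iff_map_eq_zero _).mpr fun w h => by_contra fun hw => (hnz i w hw).1 h
  have hq i : Function.Injective (ρ.q i) :=
    (injective_iff_map_eq_zero _).mpr fun w h => by_contra fun hw => (hnz i w hw).2 h
  have hunit i : IsUnit (ρ.q i) := ρ.isUnit_q (hss i) (hp i) (hq i)
  obtain ⟨w₀, -, hw₀⟩ := Submodule.exists_mem_ne_zero_of_ne_bot hirr.2.1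
  have := nontrivial_of_ne w₀ 0 hw₀
  obtain ⟨μ, hμ⟩ := Module.End.exists_iInf_eigenspace_ne_bot hss ρ.commute_euler_euler
  obtain ⟨w, hwμ, hw⟩ := Submodule.exists_mem_ne_zero_of_ne_bot hμ
  have heig i : ρ.euler i w = μ i • w :=
    Module.End.mem_eigenspace_iff.mp (Submodule.mem_iInf _ |>.mp hwμ i)
  refine ⟨μ, HeisenbergRep.eigenvalue_ne_intCast hunit heig (fun i => (hq i).comp (hp i)) hw,
    LinearEquiv.ofBijective (HeisenbergRep.laurentMap hunit w)
      ⟨HeisenbergRep.injective_laurentMap hunit heig hw,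
        HeisenbergRep.surjective_laurentMap hunit heig hirr hw⟩,
    HeisenbergRep.laurentMap_laurentP hunit heig, HeisenbergRep.laurentMap_laurentQ hunit⟩

/-- Every irreducible level-one `H_{I₀}`-module (`I₀` finite and nonempty) satisfying
Condition `C_{I₀}` — each `q_i p_i` semisimple, and `p_i w ≠ 0`, `q_i w ≠ 0` for all
nonzero `w` — is isomorphic to `M_*[μ]` for some `μ : I₀ → ℂ` with no `μ_i` an integer. -/
theorem conditionC_classification
    {I₀ W : Type} [Fintype I₀] [Nonempty I₀] [DecidableEq I₀]
    [AddCommGroup W] [Module ℂ W]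
    (ρ : HeisenbergRep I₀ W) (hirr : ρ.IsIrreducible)
    (hss : ∀ i, ⨆ c : ℂ, Module.End.eigenspace (ρ.q i * ρ.p i) c = ⊤)
    (hnz : ∀ i, ∀ w : W, w ≠ 0 → ρ.p i w ≠ 0 ∧ ρ.q i w ≠ 0) :
    ∃ mu : I₀ → ℂ, (∀ i, ∀ n : ℤ, mu i ≠ (n : ℂ)) ∧
      ∃ e : ((I₀ → ℤ) →₀ ℂ) ≃ₗ[ℂ] W,
        (∀ i f, e (laurentP mu i f) = ρ.p i (e f)) ∧
        (∀ i f, e (laurentQ i f) = ρ.q i (e f)) :=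
  conditionC_classification_general ρ hirr hss hnz
end
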